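/- Environment-enhanced pruning: let G be a finite simple graph, R ⊆ V(G), and let s, t ⊆ ∂R be independent sets of G. Define α_R(x) = max{ |J| : J is an independent set of G[R] with J ∩ ∂R = x } and E(x) = V(G) ∖ (R ∪ N(x)). If α_R(s) + α(G[E(s) ∖ E(t)]) ≤ α_R(t), then max{ |I| : I independent in G, I ∩ ∂R = s } ≤ max{ |I| : I independent in G, I ∩ ∂R = t }. -/
import Mathlib


/-- A finset of vertices is an independent set of `G`: no two of its vertices are adjacent. -/
def IsIndepSet {V : Type*} (G : SimpleGraph V) (s : Finset V) : Prop :=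
  ∀ v ∈ s, ∀ w ∈ s, ¬ G.Adj v w

-- `alphaOn G A` is the independence number of the induced subgraph `G[A]`,
-- i.e. the maximum size of an independent set of `G` contained in `A`.
open Classical in
noncomputable def alphaOn {V : Type*} (G : SimpleGraph V) (A : Finset V) : ℕ :=
  (A.powerset.filter (fun s => IsIndepSet G s)).sup Finset.card

/-- `alpha G` is the independence number of `G`. -/
noncomputable def alpha {V : Type*} [Fintype V] (G : SimpleGraph V) : ℕ :=
  alphaOn G Finset.univ

-- `nbrFinset G T = (⋃ v ∈ T, N(v)) \ T`, the (open) neighborhood of a vertex set `T`.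
open Classical in
noncomputable def nbrFinset {V : Type*} [Fintype V] (G : SimpleGraph V) (T : Finset V) : Finset V :=
  (Finset.univ.filter (fun v => ∃ u ∈ T, G.Adj u v)) \ T

-- `boundary G R` is the set of vertices of `R` having a neighbor outside `R`.
open Classical in
noncomputable def boundary {V : Type*} [Fintype V] (G : SimpleGraph V) (R : Finset V) : Finset V :=
  R.filter (fun v => ∃ u, u ∉ R ∧ G.Adj v u)

-- `alphaRestricted G R S` is the maximum size of an independent set `J` of the induced
-- subgraph `G[R]` satisfying `J ∩ ∂R = S`.
open Classical in
noncomputable def alphaRestricted {V : Type*} [Fintype V] (G : SimpleGraph V) (R S : Finset V) : ℕ :=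
  (R.powerset.filter (fun J => IsIndepSet G J ∧ J ∩ boundary G R = S)).sup Finset.card

-- `maxIndepWithBoundary G R S` is the maximum size of an independent set `I` of `G`
-- satisfying `I ∩ ∂R = S`.
open Classical in
noncomputable def maxIndepWithBoundary {V : Type*} [Fintype V] (G : SimpleGraph V) (R S : Finset V) : ℕ :=
  (Finset.univ.powerset.filter (fun I => IsIndepSet G I ∧ I ∩ boundary G R = S)).sup Finset.card

open Classical in
lemma alphaRestricted_eq {V : Type*} [Fintype V] [DecidableEq V] (G : SimpleGraph V)
    (R S : Finset V) :
    alphaRestricted G R S =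
      (R.powerset.filter (fun J => IsIndepSet G J ∧ J ∩ boundary G R = S)).sup Finset.card := by
  unfold alphaRestricted
  congr!

open Classical in
lemma maxIndepWithBoundary_eq {V : Type*} [Fintype V] [DecidableEq V] (G : SimpleGraph V)
    (R S : Finset V) :
    maxIndepWithBoundary G R S =
      (Finset.univ.powerset.filter
        (fun I => IsIndepSet G I ∧ I ∩ boundary G R = S)).sup Finset.card := by
  unfold maxIndepWithBoundary
  congr!

lemma le_alphaOn' {V : Type*} [DecidableEq V] (G : SimpleGraph V) {A B : Finset V}
    (hBA : B ⊆ A) (hB : IsIndepSet G B) : B.card ≤ alphaOn G A := by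
  unfold alphaOn
  apply Finset.le_sup
  simp only [Finset.mem_filter, Finset.mem_powerset]
  exact ⟨hBA, hB⟩

lemma le_alphaRestricted' {V : Type*} [Fintype V] [DecidableEq V] (G : SimpleGraph V)
    {R S J : Finset V} (hJR : J ⊆ R) (hJ : IsIndepSet G J) (hJb : J ∩ boundary G R = S) :
    J.card ≤ alphaRestricted G R S := by
  rw [alphaRestricted_eq]
  apply Finset.le_sup
  simp only [Finset.mem_filter, Finset.mem_powerset]
  exact ⟨hJR, hJ, hJb⟩

lemma le_maxIndepWithBoundary' {V : Type*} [Fintype V] [DecidableEq V] (G : SimpleGraph V)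
    {R S I : Finset V} (hI : IsIndepSet G I) (hIb : I ∩ boundary G R = S) :
    I.card ≤ maxIndepWithBoundary G R S := by
  rw [maxIndepWithBoundary_eq]
  apply Finset.le_sup
  simp only [Finset.mem_filter, Finset.mem_powerset]
  exact ⟨Finset.subset_univ _, hI, hIb⟩

lemma maxIndepWithBoundary_le' {V : Type*} [Fintype V] [DecidableEq V] (G : SimpleGraph V)
    {R S : Finset V} {n : ℕ}
    (h : ∀ I : Finset V, IsIndepSet G I → I ∩ boundary G R = S → I.card ≤ n) :
    maxIndepWithBoundary G R S ≤ n := by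
  rw [maxIndepWithBoundary_eq]
  apply Finset.sup_le
  intro I hI
  simp only [Finset.mem_filter, Finset.mem_powerset] at hI
  exact h I hI.2.1 hI.2.2

lemma mem_nbrFinset' {V : Type*} [Fintype V] [DecidableEq V] {G : SimpleGraph V}
    {T : Finset V} {v : V} : v ∈ nbrFinset G T ↔ (∃ u ∈ T, G.Adj u v) ∧ v ∉ T := by
  unfold nbrFinset
  simp only [Finset.mem_sdiff, Finset.mem_filter, Finset.mem_univ, true_and]

lemma mem_boundary' {V : Type*} [Fintype V] [DecidableEq V] {G : SimpleGraph V}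
    {R : Finset V} {v : V} : v ∈ boundary G R ↔ v ∈ R ∧ ∃ u, u ∉ R ∧ G.Adj v u := by
  unfold boundary
  simp only [Finset.mem_filter]

open Classical in
lemma exists_alphaRestricted' {V : Type*} [Fintype V] [DecidableEq V] (G : SimpleGraph V)
    {R t : Finset V} (htR : t ⊆ boundary G R) (ht : IsIndepSet G t) :
    ∃ J, J ⊆ R ∧ IsIndepSet G J ∧ J ∩ boundary G R = t ∧ alphaRestricted G R t = J.card := by
  have hbR : boundary G R ⊆ R := fun v hv => (mem_boundary'.1 hv).1
  obtain ⟨J, hJ, hsup⟩ := Finset.exists_mem_eq_sup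
    (R.powerset.filter (fun J => IsIndepSet G J ∧ J ∩ boundary G R = t))
    ⟨t, by
      simp only [Finset.mem_filter, Finset.mem_powerset]
      exact ⟨htR.trans hbR, ht, Finset.inter_eq_left.2 htR⟩⟩ Finset.card
  simp only [Finset.mem_filter, Finset.mem_powerset] at hJ
  exact ⟨J, hJ.1, hJ.2.1, hJ.2.2, by rw [alphaRestricted_eq]; exact hsup⟩

/-- environment-enhanced pruning: for independent sets `s, t ⊆ ∂R`, with
`E(x) = V(G) ∖ (R ∪ N(x))`, if `α_R(s) + α(G[E(s) ∖ E(t)]) ≤ α_R(t)` then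
`max{|I| : I indep in G, I ∩ ∂R = s} ≤ max{|I| : I indep in G, I ∩ ∂R = t}`. -/
theorem stmt_10 {V : Type*} [Fintype V] [DecidableEq V] (G : SimpleGraph V)
    (R s t : Finset V) (hsR : s ⊆ boundary G R) (htR : t ⊆ boundary G R)
    (hs : IsIndepSet G s) (ht : IsIndepSet G t)
    (h : alphaRestricted G R s +
        alphaOn G ((Finset.univ \ (R ∪ nbrFinset G s)) \ (Finset.univ \ (R ∪ nbrFinset G t)))
      ≤ alphaRestricted G R t) :
    maxIndepWithBoundary G R s ≤ maxIndepWithBoundary G R t := by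
  have hbR : boundary G R ⊆ R := fun v hv => (mem_boundary'.1 hv).1
  obtain ⟨J, hJR, hJind, hJb, hJcard⟩ := exists_alphaRestricted' G htR ht
  apply maxIndepWithBoundary_le' G
  intro I hIind hIb
  set Et := Finset.univ \ (R ∪ nbrFinset G t) with hEt
  set A := (I \ R) ∩ Et with hAdef
  set B := (I \ R) \ Et with hBdef
  have hsI : s ⊆ I := by rw [← hIb]; exact Finset.inter_subset_left
  have hAE : ∀ a ∈ A, a ∉ R ∧ a ∉ nbrFinset G t := by
    intro a ha
    rw [hAdef, Finset.mem_inter, Finset.mem_sdiff, hEt, Finset.mem_sdiff,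
      Finset.mem_union] at ha
    tauto
  have hAI : A ⊆ I := Finset.inter_subset_left.trans Finset.sdiff_subset
  -- step 1: |I ∩ R| ≤ α_R(s)
  have h1 : (I ∩ R).card ≤ alphaRestricted G R s := by
    apply le_alphaRestricted' G Finset.inter_subset_right
    · intro v hv w hw
      exact hIind v (Finset.mem_inter.1 hv).1 w (Finset.mem_inter.1 hw).1
    · rw [← hIb]
      ext v
      simp only [Finset.mem_inter]
      exact ⟨fun h => ⟨h.1.1, h.2⟩, fun h => ⟨⟨h.1, hbR h.2⟩, h.2⟩⟩
  -- step 2: |B| ≤ α(E(s) \ E(t))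
  have h2 : B.card ≤ alphaOn G ((Finset.univ \ (R ∪ nbrFinset G s)) \ Et) := by
    apply le_alphaOn'
    · intro v hv
      rw [hBdef, Finset.mem_sdiff, Finset.mem_sdiff] at hv
      obtain ⟨⟨hvI, hvR⟩, hvEt⟩ := hv
      rw [Finset.mem_sdiff, Finset.mem_sdiff, Finset.mem_union]
      refine ⟨⟨Finset.mem_univ _, ?_⟩, hvEt⟩
      rintro (hc | hc)
      · exact hvR hc
      · obtain ⟨⟨u, hu, hadj⟩, -⟩ := mem_nbrFinset'.1 hc
        exact hIind u (hsI hu) v hvI hadj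
    · intro v hv w hw
      exact hIind v (Finset.sdiff_subset (Finset.sdiff_subset hv))
        w (Finset.sdiff_subset (Finset.sdiff_subset hw))
  -- no edges between J and A
  have hJA : ∀ v ∈ J, ∀ w ∈ A, ¬ G.Adj v w := by
    intro v hv w hw hadj
    have hwR := (hAE w hw).1
    have hvb : v ∈ boundary G R := mem_boundary'.2 ⟨hJR hv, w, hwR, hadj⟩
    have hvt : v ∈ t := by rw [← hJb]; exact Finset.mem_inter.2 ⟨hv, hvb⟩
    exact (hAE w hw).2 (mem_nbrFinset'.2 ⟨⟨v, hvt, hadj⟩, fun hwt => hwR (hbR (htR hwt))⟩)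
  have hdisj : Disjoint J A := by
    rw [Finset.disjoint_left]
    intro v hvJ hvA
    exact (hAE v hvA).1 (hJR hvJ)
  -- J ∪ A is independent with boundary trace t
  have hUind : IsIndepSet G (J ∪ A) := by
    intro v hv w hw hadj
    rcases Finset.mem_union.1 hv with hv | hv <;> rcases Finset.mem_union.1 hw with hw | hw
    · exact hJind v hv w hw hadj
    · exact hJA v hv w hw hadj
    · exact hJA w hw v hv hadj.symm
    · exact hIind v (hAI hv) w (hAI hw) hadj
  have hUb : (J ∪ A) ∩ boundary G R = t := by
    ext v
    simp only [Finset.mem_inter, Finset.mem_union]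
    constructor
    · rintro ⟨hv | hv, hvb⟩
      · rw [← hJb]; exact Finset.mem_inter.2 ⟨hv, hvb⟩
      · exact absurd (hbR hvb) (hAE v hv).1
    · intro hvt
      have : v ∈ J ∩ boundary G R := by rw [hJb]; exact hvt
      exact ⟨Or.inl (Finset.mem_inter.1 this).1, (Finset.mem_inter.1 this).2⟩
  have hU : (J ∪ A).card ≤ maxIndepWithBoundary G R t :=
    le_maxIndepWithBoundary' G hUind hUb
  rw [Finset.card_union_of_disjoint hdisj] at hU
  -- cardinality decomposition
  have hc1 : (I ∩ R).card + (I \ R).card = I.card := Finset.card_inter_add_card_sdiff I R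
  have hc2 : A.card + B.card = (I \ R).card := Finset.card_inter_add_card_sdiff (I \ R) Et
  omega
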